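/- Let (Ŝ, B̂) be any solution of the dirty-model program, and suppose λ_b/λ_s is not an integer and λ_b/λ_s < r. Then for every row index j there exists k such that (j,k) ∉ Supp(Ŝ) and |b̂_j^(k)| = max_l |b̂_j^(l)|. -/

import Mathlib

open scoped BigOperators Classical

noncomputable section

/-- The objective of the dirty-model program:
`(1/(2n)) Σ_k ‖y^(k) − X^(k)(s^(k) + b^(k))‖₂² + λ_s ‖S‖_{1,1} + λ_b ‖B‖_{1,∞}`. -/
def dirtyObj (n p r : ℕ) (X : Fin r → Matrix (Fin n) (Fin p) ℝ)
    (y : Fin r → Fin n → ℝ) (lamS lamB : ℝ)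
    (S B : Matrix (Fin p) (Fin r) ℝ) : ℝ :=
  (1 / (2 * (n : ℝ))) *
      ∑ k, ∑ i, (y k i - ∑ j, X k i j * (S j k + B j k)) ^ 2
    + lamS * (∑ j, ∑ k, |S j k|)
    + lamB * (∑ j, ⨆ k, |B j k|)

/-- `(Ŝ, B̂)` is a solution (global minimizer) of the dirty-model program. -/
def IsDirtySol (n p r : ℕ) (X : Fin r → Matrix (Fin n) (Fin p) ℝ)
    (y : Fin r → Fin n → ℝ) (lamS lamB : ℝ)
    (Shat Bhat : Matrix (Fin p) (Fin r) ℝ) : Prop :=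
  ∀ S B : Matrix (Fin p) (Fin r) ℝ,
    dirtyObj n p r X y lamS lamB Shat Bhat ≤ dirtyObj n p r X y lamS lamB S B

/-! The loss depends on `(S, B)` only through `S + B`, so every row `(s, b)` of a solution minimises
`λ_s ‖s‖₁ + λ_b ‖b‖_∞` among all splittings of `s + b`. Suppose every entry of `b` of maximal
magnitude `M` lies over a nonzero entry of `s`. If `M = 0`, moving `t • sign s` from `s` to `b`
changes the penalty by `t (λ_b - r λ_s)` for small `t > 0`, which forces `λ_b / λ_s ≥ r`. If `M > 0`,
moving `t • sign b` on the maximal entries from `b` to `s` changes it by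
`t (λ_s Σ_k sign b_k sign s_k - λ_b)` for all small `t` of either sign, so Fermat's rule makes
`λ_b / λ_s` equal to that integer. -/

open Finset Filter Topology

section Sign

variable {α : Type*} [CommRing α] [LinearOrder α] [IsStrictOrderedRing α] {x y t : α}

theorem abs_sign_of_ne_zero (hx : x ≠ 0) : |(SignType.sign x : α)| = 1 := by
  rcases hx.lt_or_gt with h | h <;> simp [sign_neg, sign_pos, h]

theorem sign_mul_sign_self_of_ne_zero (hx : x ≠ 0) :
    (SignType.sign x : α) * SignType.sign x = 1 := by
  rw [← abs_mul_abs_self, abs_sign_of_ne_zero hx, one_mul]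

theorem abs_add_mul_sign_self (ht : |t| ≤ |x|) : |x + t * SignType.sign x| = |x| + t := by
  rcases eq_or_ne x 0 with rfl | hx
  · simp_all
  · have hfactor : x + t * SignType.sign x = SignType.sign x * (|x| + t) := by
      rw [mul_add, sign_mul_abs, mul_comm]
    rw [hfactor, abs_mul, abs_sign_of_ne_zero hx, one_mul,
      abs_of_nonneg (neg_le_iff_add_nonneg'.1 (abs_le.1 ht).1)]

theorem abs_add_mul_sign (hx : x ≠ 0) (hy : y ≠ 0) (ht : |t| ≤ |x|) :
    |x + t * SignType.sign y| = |x| + t * (SignType.sign y * SignType.sign x) := by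
  have hu : |t * (SignType.sign y * SignType.sign x)| ≤ |x| := by
    rwa [abs_mul, abs_mul, abs_sign_of_ne_zero hx, abs_sign_of_ne_zero hy, mul_one, mul_one]
  rw [← abs_add_mul_sign_self hu, mul_assoc, mul_assoc, sign_mul_sign_self_of_ne_zero hx, mul_one]

end Sign

section RowPenalty

variable {ι : Type*} [Fintype ι] {lamS lamB : ℝ} {s b : ι → ℝ}

def rowPenalty (lamS lamB : ℝ) (s b : ι → ℝ) : ℝ :=
  lamS * ∑ k, |s k| + lamB * ⨆ k, |b k|

def IsOptimalSplit (lamS lamB : ℝ) (s b : ι → ℝ) : Prop :=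
  ∀ δ : ι → ℝ, rowPenalty lamS lamB s b ≤ rowPenalty lamS lamB (s + δ) (b - δ)

theorem IsOptimalSplit.card_mul_le [Nonempty ι] (h : IsOptimalSplit lamS lamB s 0)
    (hs : ∀ k, s k ≠ 0) : Fintype.card ι * lamS ≤ lamB := by
  obtain ⟨k₀, hk₀⟩ := Finite.exists_min fun k => |s k|
  set t := |s k₀|
  have ht : 0 < t := abs_pos.2 (hs k₀)
  have hsum : ∑ k, |s k + -(t * SignType.sign (s k))| = ∑ k, |s k| - Fintype.card ι * t := by
    have hk : ∀ k, |s k + -(t * SignType.sign (s k))| = |s k| + -t := fun k => by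
      rw [← neg_mul]; exact abs_add_mul_sign_self (by rw [abs_neg, abs_of_pos ht]; exact hk₀ k)
    simp only [hk, sum_add_distrib, sum_const, card_univ, nsmul_eq_mul]
    ring
  have hsup : ⨆ k, |t * (SignType.sign (s k) : ℝ)| = t := by
    simp only [abs_mul, abs_sign_of_ne_zero (hs _), abs_of_pos ht, mul_one, ciSup_const]
  have hopt := h fun k => -(t * SignType.sign (s k))
  simp only [rowPenalty, Pi.add_apply, Pi.sub_apply, Pi.zero_apply, abs_zero, ciSup_const,
    zero_sub, neg_neg, hsup, hsum] at hopt
  exact le_of_mul_le_mul_right (by linarith) ht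

def levelSign (b : ι → ℝ) (M : ℝ) (k : ι) : ℝ :=
  if |b k| = M then SignType.sign (b k) else 0

theorem sum_abs_add_mul_levelSign {M t : ℝ} (hM : 0 < M) (hs : ∀ k, |b k| = M → s k ≠ 0)
    (ht : ∀ k, |b k| = M → |t| ≤ |s k|) :
    ∑ k, |s k + t * levelSign b M k| =
      ∑ k, |s k| + t * ∑ k ∈ univ.filter (fun k => |b k| = M),
        (SignType.sign (b k) * SignType.sign (s k) : ℝ) := by
  have hk : ∀ k, |s k + t * levelSign b M k| = |s k| + t * (if |b k| = M then
      (SignType.sign (b k) * SignType.sign (s k) : ℝ) else 0) := by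
    intro k
    by_cases hbk : |b k| = M
    · have hb : b k ≠ 0 := abs_pos.1 (hbk ▸ hM)
      simp only [levelSign, if_pos hbk, abs_add_mul_sign (hs k hbk) hb (ht k hbk)]
    · simp [levelSign, hbk]
  rw [sum_filter, mul_sum, ← sum_add_distrib]
  exact sum_congr rfl fun k _ => hk k

theorem iSup_abs_sub_mul_levelSign {M t : ℝ} {k₀ : ι} (hk₀ : |b k₀| = M) (htM : |t| ≤ M)
    (ht : ∀ k, |b k| ≠ M → |t| ≤ M - |b k|) :
    ⨆ k, |b k - t * levelSign b M k| = M - t := by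
  have hmax : ∀ k, |b k| = M → |b k - t * levelSign b M k| = M - t := fun k hk => by
    rw [levelSign, if_pos hk, sub_eq_add_neg, ← neg_mul,
      abs_add_mul_sign_self (by rwa [abs_neg, hk]), hk, sub_eq_add_neg]
  have hle : ∀ k, |b k - t * levelSign b M k| ≤ M - t := fun k => by
    by_cases hk : |b k| = M
    · exact (hmax k hk).le
    · rw [levelSign, if_neg hk, mul_zero, sub_zero]
      linarith [ht k hk, le_abs_self t]
  have : Nonempty ι := ⟨k₀⟩
  exact le_antisymm (ciSup_le hle)
    ((hmax k₀ hk₀).symm.le.trans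
      (le_ciSup (f := fun k => |b k - t * levelSign b M k|) (Finite.bddAbove_range _) k₀))

theorem IsOptimalSplit.mul_sum_sign_eq (h : IsOptimalSplit lamS lamB s b)
    (hM : 0 < ⨆ k, |b k|) (hs : ∀ k, |b k| = ⨆ l, |b l| → s k ≠ 0) :
    lamS * ∑ k ∈ univ.filter (fun k => |b k| = ⨆ l, |b l|),
      (SignType.sign (b k) * SignType.sign (s k) : ℝ) = lamB := by
  set M := ⨆ l, |b l|
  set T := ∑ k ∈ univ.filter (fun k => |b k| = M),
    (SignType.sign (b k) * SignType.sign (s k) : ℝ)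
  have : Nonempty ι := by
    by_contra hι
    rw [not_nonempty_iff] at hι
    simp [M] at hM
  obtain ⟨k₀, hk₀ : |b k₀| = M⟩ := exists_eq_ciSup_of_finite (f := fun k => |b k|)
  have hle : ∀ k, |b k| ≤ M := le_ciSup (Finite.bddAbove_range _)
  let g : ℝ → ℝ := fun t => rowPenalty lamS lamB (s + t • levelSign b M) (b - t • levelSign b M)
  have hg_apply : ∀ t, g t = lamS * ∑ k, |s k + t * levelSign b M k| +
      lamB * ⨆ k, |b k - t * levelSign b M k| := fun _ => rfl
  have hmin : IsLocalMin g 0 :=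
    Eventually.of_forall fun t => by simpa [g] using h (t • levelSign b M)
  have small : ∀ {c : ℝ}, 0 < c → ∀ᶠ t in 𝓝 (0 : ℝ), |t| ≤ c := fun hc =>
    (eventually_abs_sub_lt 0 hc).mono fun t ht => by simpa using ht.le
  have hg : g =ᶠ[𝓝 0] fun t => g 0 + t * (lamS * T - lamB) := by
    filter_upwards [small hM,
      eventually_all.2 fun k => eventually_imp_distrib_left.2 fun hk => small (abs_pos.2 (hs k hk)),
      eventually_all.2 fun k => eventually_imp_distrib_left.2 fun hk =>
        small (sub_pos.2 ((hle k).lt_of_ne hk))] with t htM hts htb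
    rw [hg_apply, hg_apply, sum_abs_add_mul_levelSign hM hs hts,
      iSup_abs_sub_mul_levelSign hk₀ htM htb]
    simp only [zero_mul, add_zero, sub_zero]
    ring
  have hslope := hmin.hasDerivAt_eq_zero
    ((((hasDerivAt_id' 0).mul_const _).const_add (g 0)).congr_of_eventuallyEq hg)
  linarith

end RowPenalty

def dirtyLoss (n p r : ℕ) (X : Fin r → Matrix (Fin n) (Fin p) ℝ) (y : Fin r → Fin n → ℝ)
    (W : Matrix (Fin p) (Fin r) ℝ) : ℝ :=
  (1 / (2 * (n : ℝ))) * ∑ k, ∑ i, (y k i - ∑ j, X k i j * W j k) ^ 2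

theorem dirtyObj_eq_dirtyLoss_add_sum_rowPenalty (n p r : ℕ)
    (X : Fin r → Matrix (Fin n) (Fin p) ℝ) (y : Fin r → Fin n → ℝ) (lamS lamB : ℝ)
    (S B : Matrix (Fin p) (Fin r) ℝ) :
    dirtyObj n p r X y lamS lamB S B =
      dirtyLoss n p r X y (S + B) + ∑ j, rowPenalty lamS lamB (S j) (B j) := by
  simp only [dirtyObj, dirtyLoss, rowPenalty, Matrix.add_apply, sum_add_distrib, mul_sum]
  ring

theorem IsDirtySol.isOptimalSplit {n p r : ℕ} {X : Fin r → Matrix (Fin n) (Fin p) ℝ}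
    {y : Fin r → Fin n → ℝ} {lamS lamB : ℝ} {Shat Bhat : Matrix (Fin p) (Fin r) ℝ}
    (hsol : IsDirtySol n p r X y lamS lamB Shat Bhat) (j : Fin p) :
    IsOptimalSplit lamS lamB (Shat j) (Bhat j) := by
  intro δ
  set S := Shat.updateRow j (Shat j + δ)
  set B := Bhat.updateRow j (Bhat j - δ)
  have hSj : S j = Shat j + δ := Matrix.updateRow_self
  have hBj : B j = Bhat j - δ := Matrix.updateRow_self
  have hS : ∀ a ≠ j, S a = Shat a := fun _ ha => Matrix.updateRow_ne ha
  have hB : ∀ a ≠ j, B a = Bhat a := fun _ ha => Matrix.updateRow_ne ha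
  have hsum : S + B = Shat + Bhat := by
    ext a k
    rcases eq_or_ne a j with rfl | ha
    · simp [hSj, hBj]
    · simp [hS a ha, hB a ha]
  have hrows : ∑ a ∈ univ.erase j, rowPenalty lamS lamB (S a) (B a) =
      ∑ a ∈ univ.erase j, rowPenalty lamS lamB (Shat a) (Bhat a) :=
    sum_congr rfl fun a ha => by rw [hS a (ne_of_mem_erase ha), hB a (ne_of_mem_erase ha)]
  have hobj := hsol S B
  rw [dirtyObj_eq_dirtyLoss_add_sum_rowPenalty, dirtyObj_eq_dirtyLoss_add_sum_rowPenalty, hsum,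
    ← add_sum_erase _ _ (mem_univ j), ← add_sum_erase _ _ (mem_univ j), hrows, hSj, hBj] at hobj
  linarith

theorem dirty_model_exists_free_max_entry_general
    (n p r : ℕ) (hr : 1 ≤ r)
    (X : Fin r → Matrix (Fin n) (Fin p) ℝ) (y : Fin r → Fin n → ℝ)
    (lamS lamB : ℝ) (hlamS : 0 < lamS)
    (hnotint : ¬ ∃ m : ℤ, lamB / lamS = (m : ℝ))
    (hlt : lamB / lamS < (r : ℝ))
    (Shat Bhat : Matrix (Fin p) (Fin r) ℝ)
    (hsol : IsDirtySol n p r X y lamS lamB Shat Bhat) :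
    ∀ j : Fin p, ∃ k : Fin r, Shat j k = 0 ∧ |Bhat j k| = ⨆ l, |Bhat j l| := by
  intro j
  by_contra! hcon
  have hopt := hsol.isOptimalSplit j
  have hfree : ∀ k, |Bhat j k| = ⨆ l, |Bhat j l| → Shat j k ≠ 0 := fun k hk h0 => hcon k h0 hk
  have : Nonempty (Fin r) := ⟨⟨0, hr⟩⟩
  have hle : ∀ k, |Bhat j k| ≤ ⨆ l, |Bhat j l| := le_ciSup (Finite.bddAbove_range _)
  rcases ((abs_nonneg _).trans (hle ⟨0, hr⟩)).eq_or_lt with hM | hM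
  · have hB : Bhat j = 0 := funext fun k => abs_nonpos_iff.1 (hM ▸ hle k)
    have hcard := (hB ▸ hopt).card_mul_le fun k => hfree k (by simp [hB])
    rw [Fintype.card_fin, ← le_div_iff₀ hlamS] at hcard
    exact hlt.not_ge hcard
  · refine hnotint ⟨∑ k ∈ univ.filter (fun k => |Bhat j k| = ⨆ l, |Bhat j l|),
      ((SignType.sign (Bhat j k) * SignType.sign (Shat j k) : SignType) : ℤ), ?_⟩
    rw [div_eq_iff hlamS.ne', ← hopt.mul_sum_sign_eq hM hfree]
    push_cast
    ring

/-- For any solution `(Ŝ, B̂)` of the dirty-model program, if `λ_b/λ_s`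
is not an integer and `λ_b/λ_s < r`, then in every row `j` there is a column `k` with
`ŝ_j^(k) = 0` whose entry of `B̂` attains the maximum magnitude of its row. -/
theorem dirty_model_exists_free_max_entry
    (n p r : ℕ) (hn : 1 ≤ n) (hp : 1 ≤ p) (hr : 1 ≤ r)
    (X : Fin r → Matrix (Fin n) (Fin p) ℝ) (y : Fin r → Fin n → ℝ)
    (lamS lamB : ℝ) (hlamS : 0 < lamS) (hlamB : 0 < lamB)
    (hnotint : ¬ ∃ m : ℤ, lamB / lamS = (m : ℝ))
    (hlt : lamB / lamS < (r : ℝ))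
    (Shat Bhat : Matrix (Fin p) (Fin r) ℝ)
    (hsol : IsDirtySol n p r X y lamS lamB Shat Bhat) :
    ∀ j : Fin p, ∃ k : Fin r, Shat j k = 0 ∧ |Bhat j k| = ⨆ l, |Bhat j l| :=
  dirty_model_exists_free_max_entry_general n p r hr X y lamS lamB hlamS hnotint hlt Shat Bhat hsol
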